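/- Density lower bound for FirmD-Cores: let β > 0 be real, and let (S,T) with S and T nonempty satisfy the (k,r,λ)-FirmD-Core property for integers k,r ≥ 0 and 1 ≤ λ ≤ |L|. With a = |S|/|T|, we have ρ(S,T) ≥ max over integers ξ with 0 ≤ ξ < λ of ((λ − ξ)(ξ + 1)^β / |L|) · max{ k·√a , r/√a }. -/

import Mathlib

/-!
Fix `ξ < λ` and let `f ℓ` be the number of vertices of `S` with at least `k` out-neighbours
in `T` in layer `ℓ`. Each `f ℓ ≤ |S|` and, counting pairs, `∑ ℓ, f ℓ ≥ λ|S|`; hence more than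
`ξ` layers have `f ℓ ≥ (λ - ξ)|S|/|L|`, since otherwise the sum would fall short of
`ξ|S| + (λ - ξ)|S|`. In each such layer `|E_ℓ(S,T)| ≥ k f ℓ`, and taking `ξ + 1` of them as `L̂`
gives the bound with `k√a = k|S|/√(|S||T|)`. The bound with `r/√a` is the same argument applied
to the reversed graph, with `S` and `T` exchanged.
-/

open Finset

/-- Number of out-neighbors of `v` inside `T`, in layer `ℓ`. -/
def dOut {V L : Type*} (D : L → V → V → Prop) [∀ ℓ, DecidableRel (D ℓ)]
    (ℓ : L) (T : Finset V) (v : V) : ℕ :=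
  (T.filter fun u => D ℓ v u).card

/-- Number of in-neighbors of `u` inside `S`, in layer `ℓ`. -/
def dIn {V L : Type*} (D : L → V → V → Prop) [∀ ℓ, DecidableRel (D ℓ)]
    (ℓ : L) (S : Finset V) (u : V) : ℕ :=
  (S.filter fun v => D ℓ v u).card

/-- `(S,T)` satisfies the `(k,r,λ)`-FirmD-Core property: every `v ∈ S` has, in at least
`λ` layers, at least `k` out-neighbors in `T`, and every `u ∈ T` has, in at least `λ`
layers, at least `r` in-neighbors in `S`. -/
def FDCProp {V L : Type*} [Fintype L] (D : L → V → V → Prop)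
    [∀ ℓ, DecidableRel (D ℓ)] (k r lam : ℕ) (S T : Finset V) : Prop :=
  (∀ v ∈ S, lam ≤ (univ.filter fun ℓ : L => k ≤ dOut D ℓ T v).card) ∧
  (∀ u ∈ T, lam ≤ (univ.filter fun ℓ : L => r ≤ dIn D ℓ S u).card)

/-- `(S,T)` is the `(k,r,λ)`-FirmD-Core: it satisfies the FirmD-Core property and is
maximal under componentwise inclusion among such pairs. -/
def IsFDC {V L : Type*} [Fintype L] (D : L → V → V → Prop)
    [∀ ℓ, DecidableRel (D ℓ)] (k r lam : ℕ) (S T : Finset V) : Prop :=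
  FDCProp D k r lam S T ∧
    ∀ S' T' : Finset V, FDCProp D k r lam S' T' → S ⊆ S' → T ⊆ T' → S' = S ∧ T' = T

/-- Number of edges of layer `ℓ` going from `S` to `T`. -/
def dEdge {V L : Type*} (D : L → V → V → Prop) [∀ ℓ, DecidableRel (D ℓ)]
    (ℓ : L) (S T : Finset V) : ℕ :=
  ((S ×ˢ T).filter fun p : V × V => D ℓ p.1 p.2).card

/-- The directed multilayer density
`ρ(S,T) = max_{∅ ≠ L̂ ⊆ L} (min_{ℓ ∈ L̂} |E_ℓ(S,T)|/√(|S||T|)) · |L̂|^β`. -/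
noncomputable def dDensity {V L : Type*} (D : L → V → V → Prop)
    [∀ ℓ, DecidableRel (D ℓ)] (β : ℝ) (S T : Finset V) : ℝ :=
  sSup { x : ℝ | ∃ Lh : Finset L, Lh.Nonempty ∧
    x = sInf { y : ℝ | ∃ ℓ ∈ Lh,
        y = (dEdge D ℓ S T : ℝ) / Real.sqrt ((S.card : ℝ) * (T.card : ℝ)) } *
      (Lh.card : ℝ) ^ β }

theorem le_card_filter_of_le_sum {ι : Type*} [Fintype ι] {f : ι → ℝ} {n : ℝ} {lam ξ : ℕ}
    (hn : 0 ≤ n) (hf : ∀ i, f i ≤ n) (hsum : lam * n ≤ ∑ i, f i) (hξ : ξ < lam)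
    (hlam : lam ≤ Fintype.card ι) :
    ξ + 1 ≤ #{i | (lam - ξ) * n / Fintype.card ι ≤ f i} := by
  set t : ℝ := (lam - ξ) * n / Fintype.card ι
  by_contra! hA
  have hm : (0 : ℝ) < Fintype.card ι := Nat.cast_pos.mpr (by omega)
  have hB : ({i | ¬t ≤ f i} : Finset ι).Nonempty := by
    rw [← card_pos]
    have := card_filter_add_card_filter_not (s := univ) (fun i => t ≤ f i)
    rw [card_univ] at this
    omega
  have hsumA : ∑ i with t ≤ f i, f i ≤ ξ * n := by
    refine (sum_le_card_nsmul _ _ n fun i _ => hf i).trans ?_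
    rw [nsmul_eq_mul]
    exact mul_le_mul_of_nonneg_right (by exact_mod_cast Nat.lt_succ_iff.mp hA) hn
  have hsumB : ∑ i with ¬t ≤ f i, f i < (lam - ξ) * n := by
    calc ∑ i with ¬t ≤ f i, f i < ∑ i with ¬t ≤ f i, t :=
          sum_lt_sum_of_nonempty hB fun i hi => not_le.mp (mem_filter.mp hi).2
      _ ≤ Fintype.card ι * t := by
          rw [sum_const, nsmul_eq_mul]
          gcongr
          · exact div_nonneg (mul_nonneg (by simp [hξ.le]) hn) hm.le
          · exact_mod_cast card_le_univ _
      _ = (lam - ξ) * n := mul_div_cancel₀ _ hm.ne'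
  rw [← sum_filter_add_sum_filter_not univ (fun i => t ≤ f i)] at hsum
  linarith

theorem Real.sqrt_div_eq_div_sqrt_mul {s : ℝ} (hs : 0 ≤ s) (t : ℝ) : √(s / t) = s / √(s * t) := by
  rw [Real.sqrt_mul hs, ← div_div, Real.div_sqrt, Real.sqrt_div hs]

section

variable {V L : Type*} (D : L → V → V → Prop) [∀ ℓ, DecidableRel (D ℓ)]

theorem dEdge_eq_sum_dOut (ℓ : L) (S T : Finset V) : dEdge D ℓ S T = ∑ v ∈ S, dOut D ℓ T v := by
  simp only [dEdge, dOut, card_filter, sum_product]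

theorem dEdge_swap (ℓ : L) (S T : Finset V) :
    dEdge (fun ℓ u v => D ℓ v u) ℓ T S = dEdge D ℓ S T := by
  simp only [dEdge_eq_sum_dOut, dOut, card_filter]
  exact sum_comm

theorem dDensity_swap (β : ℝ) (S T : Finset V) :
    dDensity (fun ℓ u v => D ℓ v u) β T S = dDensity D β S T := by
  simp only [dDensity, dEdge_swap, mul_comm (#T : ℝ)]

theorem mul_card_filter_le_dEdge (k : ℕ) (ℓ : L) (S T : Finset V) :
    k * #{v ∈ S | k ≤ dOut D ℓ T v} ≤ dEdge D ℓ S T := by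
  rw [dEdge_eq_sum_dOut, mul_comm, ← smul_eq_mul]
  exact (card_nsmul_le_sum _ _ _ fun v hv => (mem_filter.mp hv).2).trans
    (sum_le_sum_of_subset (filter_subset _ _))

theorem le_dDensity [Fintype L] (β : ℝ) (S T : Finset V) {Lh : Finset L} (hLh : Lh.Nonempty)
    {c : ℝ} (hc : ∀ ℓ ∈ Lh, c ≤ (dEdge D ℓ S T : ℝ) / √((#S : ℝ) * #T)) :
    c * (#Lh : ℝ) ^ β ≤ dDensity D β S T := by
  unfold dDensity
  refine le_trans ?_ (le_csSup ?_ ⟨Lh, hLh, rfl⟩)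
  · gcongr
    obtain ⟨ℓ, hℓ⟩ := hLh
    exact le_csInf ⟨_, ℓ, hℓ, rfl⟩ fun y ⟨ℓ, hℓ, hy⟩ => hy ▸ hc ℓ hℓ
  · refine BddAbove.mono ?_ (Set.finite_range fun Lh : Finset L => sInf {y : ℝ | ∃ ℓ ∈ Lh,
      y = (dEdge D ℓ S T : ℝ) / √((#S : ℝ) * #T)} * (#Lh : ℝ) ^ β).bddAbove
    rintro x ⟨Lh, -, rfl⟩
    exact ⟨Lh, rfl⟩

theorem le_dDensity_of_forall_le_card_filter_dOut [Fintype L] (β : ℝ) {k lam ξ : ℕ}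
    {S T : Finset V} (hξ : ξ < lam) (hlam : lam ≤ Fintype.card L)
    (hS : ∀ v ∈ S, lam ≤ #{ℓ | k ≤ dOut D ℓ T v}) :
    ((lam : ℝ) - ξ) * ((ξ : ℝ) + 1) ^ β / Fintype.card L * (k * (#S / √((#S : ℝ) * #T))) ≤
      dDensity D β S T := by
  set f : L → ℕ := fun ℓ => #{v ∈ S | k ≤ dOut D ℓ T v}
  have hsum : lam * #S ≤ ∑ ℓ, f ℓ := by
    rw [mul_comm, ← smul_eq_mul]
    calc #S • lam ≤ ∑ v ∈ S, #{ℓ | k ≤ dOut D ℓ T v} := card_nsmul_le_sum _ _ _ hS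
      _ = ∑ ℓ, f ℓ :=
        sum_card_bipartiteAbove_eq_sum_card_bipartiteBelow (r := fun v ℓ => k ≤ dOut D ℓ T v)
  obtain ⟨Lh, hLh, hcard⟩ := exists_subset_card_eq <|
    le_card_filter_of_le_sum (f := fun ℓ => (f ℓ : ℝ)) (n := #S) (Nat.cast_nonneg _)
      (fun ℓ => by exact_mod_cast card_filter_le _ _) (by exact_mod_cast hsum) hξ hlam
  have hLh_ne : Lh.Nonempty := by rw [← card_pos, hcard]; omega
  have := le_dDensity D β S T hLh_ne
    (c := k * ((lam - ξ) * #S / Fintype.card L) / √((#S : ℝ) * #T)) fun ℓ hℓ => by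
      gcongr
      calc k * ((lam - ξ) * #S / Fintype.card L) ≤ (k * f ℓ : ℝ) := by
            gcongr; exact (mem_filter.mp (hLh hℓ)).2
        _ ≤ dEdge D ℓ S T := by exact_mod_cast mul_card_filter_le_dEdge D k ℓ S T
  rw [hcard] at this
  push_cast at this
  convert this using 1
  ring

end

/-- Density lower bound for FirmD-Cores (Lemma 4): with `a = |S|/|T|`,
`ρ(S,T) ≥ max_{0 ≤ ξ < λ} ((λ - ξ)(ξ+1)^β / |L|) · max{k√a, r/√a}`. -/
theorem firmdcore_density_lb {V L : Type*} [Fintype L] (D : L → V → V → Prop)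
    [∀ ℓ, DecidableRel (D ℓ)] (β : ℝ)
    (k r lam : ℕ) (hlam : 1 ≤ lam) (hlamL : lam ≤ Fintype.card L)
    (S T : Finset V)
    (h : FDCProp D k r lam S T)
    (a : ℝ) (ha : a = (S.card : ℝ) / (T.card : ℝ)) :
    ((Finset.range lam).sup' (Finset.nonempty_range_iff.mpr (by omega))
        fun ξ : ℕ => ((lam : ℝ) - (ξ : ℝ)) * ((ξ : ℝ) + 1) ^ β / (Fintype.card L : ℝ) *
          max ((k : ℝ) * Real.sqrt a) ((r : ℝ) / Real.sqrt a)) ≤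
      dDensity D β S T := by
  refine sup'_le _ _ fun ξ hξ => ?_
  rw [mem_range] at hξ
  have hcoef : 0 ≤ ((lam : ℝ) - ξ) * ((ξ : ℝ) + 1) ^ β / Fintype.card L :=
    div_nonneg (mul_nonneg (sub_nonneg.mpr (by exact_mod_cast hξ.le))
      (Real.rpow_nonneg (by positivity) _)) (Nat.cast_nonneg _)
  rw [mul_max_of_nonneg _ _ hcoef, ha]
  refine max_le ?_ ?_
  · rw [Real.sqrt_div_eq_div_sqrt_mul (Nat.cast_nonneg _)]
    exact le_dDensity_of_forall_le_card_filter_dOut D β hξ hlamL h.1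
  · rw [div_eq_mul_inv (r : ℝ), ← Real.sqrt_inv, inv_div,
      Real.sqrt_div_eq_div_sqrt_mul (Nat.cast_nonneg _), ← dDensity_swap]
    exact le_dDensity_of_forall_le_card_filter_dOut (fun ℓ u v => D ℓ v u) β hξ hlamL h.2
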